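/- arXiv:1605.07492 — 6 statements merged into one kernel-verified Lean document; each statement's English description precedes it below -/
import Mathlib

section
/- For every connected graph G with at least one edge, the Ramsey number satisfies R(G) ≥ (χ(G) − 1)(|G| − 1) + σ(G), where σ(G) is the minimum size of a colour class over all proper χ(G)-colourings of G. -/
/-!
Burr's construction. Split `K_N` into `χ - 1` blocks of `|G| - 1` vertices followed by one block
of the remaining `N - (χ - 1)(|G| - 1)` vertices; colour an edge red inside a block and blue
between blocks. A red copy of the connected graph `G` lies in a single block, which is too small
once `N < (χ - 1)(|G| - 1) + σ ≤ (χ - 1)(|G| - 1) + |G|`. A blue copy is properly coloured by its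
blocks with `χ` colours, so the last block contains a whole colour class and has at least
`σ ≥ 1` vertices.
-/

/-- The minimum size of a colour class over all proper colourings of `G` with `k` colours. -/
noncomputable def minColourClass {V : Type} [Fintype V] (G : SimpleGraph V) (k : ℕ) : ℕ :=
  sInf {m | ∃ C : G.Coloring (Fin k), ∃ i : Fin k,
    m = (Finset.univ.filter fun v => C v = i).card}

open Finset

lemma SimpleGraph.Preconnected.eq_of_forall_adj {V α : Type*} {G : SimpleGraph V}
    (hG : G.Preconnected) {p : V → α} (hp : ∀ ⦃u v⦄, G.Adj u v → p u = p v) (u v : V) :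
    p u = p v := by
  obtain ⟨w⟩ := hG u v
  induction w with
  | nil => rfl
  | cons h _ ih => exact (hp h).trans ih

lemma minColourClass_le {V : Type} [Fintype V] {G : SimpleGraph V} {k : ℕ}
    (C : G.Coloring (Fin k)) (i : Fin k) :
    minColourClass G k ≤ #{v | C v = i} :=
  Nat.sInf_le ⟨C, i, rfl⟩

lemma minColourClass_pos {V : Type} [Fintype V] {G : SimpleGraph V} {k : ℕ}
    (hk : G.chromaticNumber = k) (hk0 : 0 < k) : 0 < minColourClass G k := by
  obtain ⟨C⟩ : G.Colorable k := SimpleGraph.chromaticNumber_le_iff_colorable.1 hk.le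
  rw [Nat.pos_iff_ne_zero, minColourClass, Ne, Nat.sInf_eq_zero, not_or]
  refine ⟨fun ⟨C', i, h0⟩ => ?_, Set.nonempty_iff_ne_empty.1 ⟨_, C, ⟨0, hk0⟩, rfl⟩⟩
  obtain ⟨v, hv⟩ := SimpleGraph.le_chromaticNumber_iff_forall_surjective.1 hk.ge C' i
  exact (card_pos.2 ⟨v, by simp [hv]⟩).ne h0

lemma card_filter_comp_le_of_injective {α β γ : Type*} [Fintype α] [Fintype β]
    [DecidableEq γ] {f : α → β} (hf : Function.Injective f) (p : β → γ) (c : γ) :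
    #{a | p (f a) = c} ≤ #{b | p b = c} :=
  card_le_card_of_injOn f (fun a ha => by simpa using ha) hf.injOn

lemma card_le_of_forall_val_mem_Ico {N a b : ℕ} {s : Finset (Fin N)}
    (hs : ∀ u ∈ s, (u : ℕ) ∈ Ico a b) : #s ≤ b - a := by
  simpa using card_le_card_of_injOn (fun u : Fin N => (u : ℕ)) hs Fin.val_injective.injOn

def blockIndex (m K N : ℕ) (u : Fin N) : Fin (K + 1) :=
  ⟨min (u / m) K, Nat.lt_succ_of_le (min_le_right _ _)⟩

section blockIndex

variable {m K N : ℕ}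

lemma card_blockIndex_eq_last_le :
    #{u | blockIndex m K N u = Fin.last K} ≤ N - K * m := by
  refine card_le_of_forall_val_mem_Ico fun u hu => ?_
  simp only [blockIndex, mem_filter, mem_univ, true_and, Fin.ext_iff, Fin.val_last,
    min_eq_right_iff] at hu
  exact mem_Ico.2 ⟨(Nat.mul_le_mul_right m hu).trans (Nat.div_mul_le_self u m), u.isLt⟩

lemma card_blockIndex_eq_le (hm : 0 < m) (j : Fin (K + 1)) :
    #{u | blockIndex m K N u = j} ≤ max m (N - K * m) := by
  rcases j.eq_castSucc_or_eq_last with ⟨j, rfl⟩ | rfl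
  · refine (card_le_of_forall_val_mem_Ico (a := j * m) (b := j * m + m) fun u hu => ?_).trans ?_
    · simp only [blockIndex, mem_filter, mem_univ, true_and, Fin.ext_iff, Fin.val_castSucc] at hu
      have hdiv := (Nat.div_eq_iff hm).1 (show (u : ℕ) / m = j by omega)
      exact mem_Ico.2 ⟨hdiv.1, by omega⟩
    · simp
  · exact card_blockIndex_eq_last_le.trans (le_max_right _ _)

end blockIndex

/-- The arrow relation `K_N → (G)` of Ramsey theory. -/
def RamseyArrow {V : Type*} (N : ℕ) (G : SimpleGraph V) : Prop :=
  ∀ c : Fin N → Fin N → Bool, (∀ u v, c u v = c v u) →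
    ∃ b : Bool, ∃ f : V → Fin N, Function.Injective f ∧ ∀ u v, G.Adj u v → c (f u) (f v) = b

theorem RamseyArrow.exists_card_le_or_exists_coloring {V ι : Type*} [Fintype V] [DecidableEq ι]
    {N : ℕ} {G : SimpleGraph V} (hN : RamseyArrow N G) (hG : G.Connected) (p : Fin N → ι) :
    (∃ j, Fintype.card V ≤ #{u | p u = j}) ∨
      ∃ C : G.Coloring ι, ∀ i, #{v | C v = i} ≤ #{u | p u = i} := by
  obtain ⟨b, f, hf, hmono⟩ := hN (fun u v => p u = p v) fun u v => by simp [eq_comm]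
  cases b with
  | true =>
    obtain ⟨x⟩ := hG.nonempty
    have hconst (v : V) : p (f v) = p (f x) :=
      hG.preconnected.eq_of_forall_adj (p := p ∘ f)
        (fun u v huv => by simpa using hmono u v huv) v x
    refine .inl ⟨p (f x), ?_⟩
    calc Fintype.card V = #{v | p (f v) = p (f x)} := by
          rw [filter_true_of_mem fun v _ => hconst v, card_univ]
      _ ≤ _ := card_filter_comp_le_of_injective hf p _
  | false =>
    exact .inr ⟨.mk (p ∘ f) fun huv => by simpa using hmono _ _ huv,
      card_filter_comp_le_of_injective hf p⟩

/-- For every connected graph `G` with at least one edge,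
`R(G) ≥ (χ(G) − 1)(|G| − 1) + σ(G)`: any `N` such that every 2-colouring of `K_N`
contains a monochromatic copy of `G` satisfies `N ≥ (χ(G) − 1)(|G| − 1) + σ(G)`. -/
theorem stmt_1 {V : Type} [Fintype V] (G : SimpleGraph V)
    (hconn : G.Connected) (hedge : G.edgeSet.Nonempty)
    (k : ℕ) (hk : G.chromaticNumber = k)
    (N : ℕ)
    (hN : ∀ c : Fin N → Fin N → Bool, (∀ u v, c u v = c v u) →
      ∃ b : Bool, ∃ f : V → Fin N, Function.Injective f ∧
        ∀ u v, G.Adj u v → c (f u) (f v) = b) :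
    (k - 1) * (Fintype.card V - 1) + minColourClass G k ≤ N := by
  obtain ⟨e, he⟩ := hedge
  induction e using Sym2.ind with | _ x y => ?_
  have hcard : 2 ≤ Fintype.card V :=
    Fintype.one_lt_card_iff_nontrivial.2 ⟨x, y, G.ne_of_adj he⟩
  obtain ⟨C₀⟩ : G.Colorable k := SimpleGraph.chromaticNumber_le_iff_colorable.1 hk.le
  obtain ⟨K, rfl⟩ : ∃ K, k = K + 1 := Nat.exists_eq_add_one.2 (Fin.pos_iff_nonempty.2 ⟨C₀ x⟩)
  have hσ_le : minColourClass G (K + 1) ≤ Fintype.card V :=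
    (minColourClass_le C₀ (C₀ x)).trans (card_le_univ _)
  have hσ_pos := minColourClass_pos hk K.succ_pos
  set m := Fintype.card V - 1
  have hm : 0 < m := by omega
  by_contra! hlt
  rw [Nat.add_sub_cancel] at hlt
  rcases RamseyArrow.exists_card_le_or_exists_coloring hN hconn (blockIndex m K N) with
    ⟨j, hj⟩ | ⟨C, hC⟩
  · have := card_blockIndex_eq_le (N := N) hm j
    omega
  · have := (minColourClass_le C (Fin.last K)).trans ((hC _).trans card_blockIndex_eq_last_le)
    omega
end

section
/- Consider the 2-colouring of K_N with N = (χ(G)−1)(|G|−1) + σ(G) − 1 obtained by partitioning the vertices into parts X_1,…,X_{χ(G)−1} of size |G|−1 and a part Y of size σ(G)−1, colouring all edges within a part blue and all edges between parts red. This colouring contains no monochromatic copy of the connected graph G (with at least one edge). -/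
/-- Burr's construction: partition the `(χ(G)−1)(|G|−1) + σ(G) − 1` vertices into
parts `X_1, …, X_{χ(G)−1}` of size `|G|−1` and a part `Y` of size `σ(G)−1`; colour edges
within a part blue (`false`) and edges between distinct parts red (`true`).
This colouring contains no monochromatic copy of the connected graph `G`. -/
theorem stmt_2 {V : Type} [Fintype V] (G : SimpleGraph V)
    (hconn : G.Connected) (hedge : G.edgeSet.Nonempty)
    (k : ℕ) (hk : G.chromaticNumber = k) :
    ¬ ∃ (b : Bool)
        (f : V → (Fin (k - 1) × Fin (Fintype.card V - 1)) ⊕ Fin (minColourClass G k - 1)),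
      Function.Injective f ∧
      ∀ u v, G.Adj u v →
        decide ((Sum.elim (fun p => (p.1 : ℕ)) (fun _ => k - 1) (f u)) ≠
                (Sum.elim (fun p => (p.1 : ℕ)) (fun _ => k - 1) (f v))) = b := by
  classical
  -- basic facts
  obtain ⟨u₀, v₀, huv⟩ : ∃ u v, G.Adj u v := by
    obtain ⟨e, he⟩ := hedge
    induction e using Sym2.ind with
    | _ u v => exact ⟨u, v, he⟩
  have hV : Nonempty V := ⟨u₀⟩
  have hcardV : 1 ≤ Fintype.card V := Fintype.card_pos
  have hcol : G.Colorable k := by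
    have := G.colorable_chromaticNumber_of_fintype
    rwa [hk, ENat.toNat_coe] at this
  let C0 : G.Coloring (Fin k) := hcol.some
  have hk1 : 1 ≤ k := by
    rcases Nat.eq_zero_or_pos k with h | h
    · exact absurd (h ▸ C0 u₀).isLt (by simp [h])
    · exact h
  set S : Set ℕ := {m | ∃ C : G.Coloring (Fin k), ∃ i : Fin k,
      m = (Finset.univ.filter fun v => C v = i).card} with hS
  have hσdef : minColourClass G k = sInf S := rfl
  -- every colour class is nonempty, so minColourClass ≥ 1
  have hσpos : 1 ≤ minColourClass G k := by
    rw [hσdef, Nat.one_le_iff_ne_zero]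
    intro h0
    have hne : S.Nonempty := ⟨_, C0, ⟨0, hk1⟩, rfl⟩
    have h0mem : 0 ∈ S := by
      have := Nat.sInf_mem hne
      rwa [h0] at this
    obtain ⟨C, i, hi⟩ := h0mem
    have hempty : ∀ v, C v ≠ i := by
      intro v hv
      have hmemv : v ∈ Finset.univ.filter fun v => C v = i := by simp [hv]
      rw [Finset.card_eq_zero.mp hi.symm] at hmemv
      exact absurd hmemv (Finset.notMem_empty v)
    obtain ⟨n, rfl⟩ : ∃ n, k = n + 1 := ⟨k - 1, by omega⟩
    have hsome : ∀ v, ((finSuccEquiv' i) (C v)).isSome := by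
      intro v
      rcases h : (finSuccEquiv' i) (C v) with _ | j
      · exact absurd (((finSuccEquiv' i).apply_eq_iff_eq_symm_apply).mp h)
          (by simpa [finSuccEquiv'_symm_none] using hempty v)
      · simp
    have hcol' : G.Colorable n := by
      refine ⟨SimpleGraph.Coloring.mk (fun v => ((finSuccEquiv' i) (C v)).get (hsome v)) ?_⟩
      intro a b hab heq
      apply C.valid hab
      apply (finSuccEquiv' i).injective
      rw [← Option.some_get (hsome a), ← Option.some_get (hsome b)]
      exact congrArg some heq
    have := hcol'.chromaticNumber_le
    rw [hk] at this
    exact absurd (Nat.cast_le.mp this) (by omega)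
  -- minColourClass ≤ card V
  have hσle : minColourClass G k ≤ Fintype.card V := by
    have hmem : (Finset.univ.filter fun v => C0 v = ⟨0, hk1⟩).card ∈ S := ⟨C0, _, rfl⟩
    calc minColourClass G k ≤ _ := Nat.sInf_le hmem
      _ ≤ Fintype.card V := by
        simpa using Finset.card_filter_le Finset.univ fun v => C0 v = ⟨0, hk1⟩
  rintro ⟨b, f, hinj, hmono⟩
  set L : V → ℕ := fun v => Sum.elim (fun p => (p.1 : ℕ)) (fun _ => k - 1) (f v) with hL
  cases b with
  | true =>
    -- red case: L is a proper colouring, its class k-1 has ≤ σ-1 elements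
    have hadj : ∀ u v, G.Adj u v → L u ≠ L v := fun u v h =>
      of_decide_eq_true (hmono u v h)
    have hLlt : ∀ v, L v < k := by
      intro v
      rcases h : f v with p | x
      · simp only [hL, h, Sum.elim_inl]
        exact lt_of_lt_of_le p.1.isLt (Nat.sub_le k 1)
      · simp only [hL, h, Sum.elim_inr]
        omega
    let C : G.Coloring (Fin k) := SimpleGraph.Coloring.mk (fun v => ⟨L v, hLlt v⟩)
      (fun h heq => hadj _ _ h (congrArg Fin.val heq))
    have hik : k - 1 < k := by omega
    have hmem : (Finset.univ.filter fun v => C v = ⟨k - 1, hik⟩).card ∈ S := ⟨C, _, rfl⟩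
    have h1 : minColourClass G k ≤ (Finset.univ.filter fun v => C v = ⟨k - 1, hik⟩).card :=
      Nat.sInf_le hmem
    have hsub : ∀ v : {v // C v = ⟨k - 1, hik⟩}, ∃ x, f v.1 = Sum.inr x := by
      rintro ⟨v, hv⟩
      rcases h : f v with p | x
      · exfalso
        have hLv : L v = k - 1 := congrArg Fin.val hv
        have : L v = (p.1 : ℕ) := by simp [hL, h]
        have := p.1.isLt
        omega
      · exact ⟨x, rfl⟩
    choose g hg using hsub
    have hginj : Function.Injective g := by
      intro a b hab
      apply Subtype.ext
      apply hinj
      rw [hg a, hg b, hab]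
    have h2 := Fintype.card_le_of_injective g hginj
    rw [Fintype.card_subtype, Fintype.card_fin] at h2
    omega
  | false =>
    -- blue case: L is constant on the connected graph G
    have hadj : ∀ u v, G.Adj u v → L u = L v := fun u v h =>
      not_not.mp (of_decide_eq_false (hmono u v h))
    have key : ∀ {u v : V}, G.Walk u v → L u = L v := by
      intro u v w
      induction w with
      | nil => rfl
      | cons h _ ih => exact (hadj _ _ h).trans ih
    have hconst : ∀ v, L v = L u₀ := fun v =>
      (key (hconn.preconnected v u₀).some)
    rcases h₀ : f u₀ with p | x
    · -- everything lands in part p.1 of size card V - 1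
      have hall : ∀ v, ∃ q, f v = Sum.inl q ∧ q.1 = p.1 := by
        intro v
        rcases h : f v with q | x
        · refine ⟨q, rfl, ?_⟩
          apply Fin.ext
          have h1 : L v = (q.1 : ℕ) := by simp [hL, h]
          have h2 : L u₀ = (p.1 : ℕ) := by simp [hL, h₀]
          have := hconst v
          omega
        · exfalso
          have h1 : L v = k - 1 := by simp [hL, h]
          have h2 : L u₀ = (p.1 : ℕ) := by simp [hL, h₀]
          have h3 := p.1.isLt
          have := hconst v
          omega
      choose g hg hg1 using hall
      have hginj : Function.Injective (fun v => (g v).2) := by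
        intro a b hab
        apply hinj
        rw [hg a, hg b]
        have : g a = g b := Prod.ext ((hg1 a).trans (hg1 b).symm) hab
        rw [this]
      have := Fintype.card_le_of_injective _ hginj
      rw [Fintype.card_fin] at this
      omega
    · -- everything lands in Y of size σ - 1
      have hall : ∀ v, ∃ y, f v = Sum.inr y := by
        intro v
        rcases h : f v with q | y
        · exfalso
          have h1 : L v = (q.1 : ℕ) := by simp [hL, h]
          have h2 : L u₀ = k - 1 := by simp [hL, h₀]
          have h3 := q.1.isLt
          have := hconst v
          omega
        · exact ⟨y, rfl⟩
      choose g hg using hall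
      have hginj : Function.Injective g := by
        intro a b hab
        apply hinj
        rw [hg a, hg b, hab]
      have := Fintype.card_le_of_injective g hginj
      rw [Fintype.card_fin] at this
      omega
end

section
/- For r ≥ 2 and n ≥ 1, there is a 2-colouring of the edges of the complete graph on (r²−r+1)n − r vertices with no monochromatic connected subgraph containing n pairwise disjoint copies of K_r. Hence R(c(nK_r)) ≥ (r²−r+1)n − r + 1. -/
private lemma reach_part {V : Type*} {G : SimpleGraph V} {f : V → ℕ}
    (h : ∀ a b, G.Adj a b → f a = f b) {u v : V} (hr : G.Reachable u v) : f u = f v := by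
  obtain ⟨w⟩ := hr
  induction w with
  | nil => rfl
  | cons h' _ ih => exact (h _ _ h').trans ih

private lemma card_interval_filter {N a q : ℕ} (P : Fin N → Prop) [DecidablePred P]
    (h : ∀ v, P v → a ≤ v.val ∧ v.val < a + q) :
    (Finset.univ.filter P).card ≤ q := by
  have hle := Finset.card_le_card_of_injOn
      (s := Finset.univ.filter P) (t := Finset.range q)
      (fun v : Fin N => v.val - a)
      (fun v hv => by
        obtain ⟨h1, h2⟩ := h v (Finset.mem_filter.1 hv).2
        exact Finset.mem_range.2 (show v.val - a < q by omega))
      (fun v hv w hw hvw => by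
        simp only [Finset.mem_coe, Finset.mem_filter] at hv hw
        obtain ⟨h1, h2⟩ := h v hv.2
        obtain ⟨h3, h4⟩ := h w hw.2
        have hvw' : v.val - a = w.val - a := hvw
        exact Fin.ext (by omega))
  simpa using hle

/-- Lower bound `R(c(nK_r)) ≥ (r²−r+1)n − r + 1`: for `r ≥ 2` and `n ≥ 1` there is a
symmetric 2-colouring of the edges of the complete graph on `(r²−r+1)n − r` vertices with
no `n` pairwise disjoint monochromatic copies of `K_r` of the same colour all lying in a
single connected component of that colour. -/
theorem stmt_4 (r n : ℕ) (hr : 2 ≤ r) (hn : 1 ≤ n) :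
    ∃ c : Fin ((r ^ 2 - r + 1) * n - r) → Fin ((r ^ 2 - r + 1) * n - r) → Bool,
      (∀ u v, c u v = c v u) ∧
      ¬ ∃ b : Bool, ∃ K : Fin n → Finset (Fin ((r ^ 2 - r + 1) * n - r)),
        (∀ i, (K i).card = r) ∧
        (∀ i, ∀ u ∈ K i, ∀ v ∈ K i, u ≠ v → c u v = b) ∧
        (∀ i j, i ≠ j → Disjoint (K i) (K j)) ∧
        (∀ i j, ∀ u ∈ K i, ∀ v ∈ K j,
          (SimpleGraph.fromRel fun x y => c x y = b).Reachable u v) := by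
  classical
  obtain ⟨s, hs⟩ : ∃ s, s = n - 1 := ⟨_, rfl⟩
  obtain ⟨q, hqdef⟩ : ∃ q, q = r * n - 1 := ⟨_, rfl⟩
  obtain ⟨part, hpart⟩ : ∃ p : ℕ → ℕ,
      p = fun v => if v < s then 0 else (v - s) / q + 1 := ⟨_, rfl⟩
  have hsq : r ^ 2 = r * r := sq r
  have h2r : 2 * r ≤ r * r := Nat.mul_le_mul_right r hr
  have hrn2 : 2 ≤ r * n := le_trans hr (Nat.le_mul_of_pos_right r hn)
  have hq : 1 ≤ q := by omega
  have hrn : 1 ≤ r * n := by omega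
  have h1 : r ≤ r ^ 2 := by omega
  have h3 : r ≤ (r ^ 2 - r + 1) * n := by
    calc r ≤ r ^ 2 - r + 1 := by omega
    _ ≤ (r ^ 2 - r + 1) * n := Nat.le_mul_of_pos_right _ hn
  have key : (r ^ 2 - r + 1) * n - r = s + (r - 1) * q := by
    rw [hs, hqdef]
    zify [h1, h3, hn, hrn, (show 1 ≤ r by omega)]
    ring
  have hpartlt : ∀ v : Fin ((r ^ 2 - r + 1) * n - r), part v.val < r := by
    intro v
    have hv : v.val < (r ^ 2 - r + 1) * n - r := v.isLt
    simp only [hpart]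
    split
    · omega
    · rename_i h
      have hd : (v.val - s) / q < r - 1 := Nat.div_lt_of_lt_mul (by
        rw [mul_comm q (r - 1)]
        omega)
      generalize (v.val - s) / q = d at hd ⊢
      omega
  -- fiber cardinality bounds
  have hfiber0 : (Finset.univ.filter
      fun v : Fin ((r ^ 2 - r + 1) * n - r) => part v.val = 0).card ≤ s := by
    apply card_interval_filter (a := 0)
    intro v hv
    simp only [hpart] at hv
    split at hv
    · omega
    · exact absurd hv (Nat.succ_ne_zero _)
  have hfiberS : ∀ k, (Finset.univ.filter
      fun v : Fin ((r ^ 2 - r + 1) * n - r) => part v.val = k + 1).card ≤ q := by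
    intro k
    apply card_interval_filter (a := s + k * q)
    intro v hv
    simp only [hpart] at hv
    split at hv
    · exact absurd hv (by omega)
    · rename_i h
      have hd : (v.val - s) / q = k := Nat.add_right_cancel hv
      have hl : k * q ≤ v.val - s := by
        have h' := Nat.div_mul_le_self (v.val - s) q
        rw [hd] at h'
        exact h'
      have hu : v.val - s < k * q + q := by
        have h' : (v.val - s) / q < k + 1 := by rw [hd]; omega
        have h'' := (Nat.div_lt_iff_lt_mul (by omega : 0 < q)).1 h'
        calc v.val - s < (k + 1) * q := h''
        _ = k * q + q := by ring
      generalize k * q = m at hl hu ⊢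
      omega
  -- the colouring
  refine ⟨fun u v => decide (part u.val = part v.val), fun u v => by
    simp [eq_comm], ?_⟩
  rintro ⟨b, K, hcard, hclq, hdisj, hreach⟩
  cases b with
  | false =>
    -- blue: every clique has exactly one vertex in each part, in particular part 0
    have hx : ∀ i, ∃ x ∈ K i, part x.val = 0 := by
      intro i
      have hinj : Set.InjOn (fun v : Fin ((r ^ 2 - r + 1) * n - r) => part v.val) (K i) := by
        intro u hu v hv huv
        by_contra hne
        have hc := hclq i u hu v hv hne
        simp only [decide_eq_false_iff_not] at hc
        exact hc huv
      have himg : ((K i).image fun v => part v.val) = Finset.range r := by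
        apply Finset.eq_of_subset_of_card_le
        · intro p hp
          obtain ⟨v, hv, rfl⟩ := Finset.mem_image.1 hp
          exact Finset.mem_range.2 (hpartlt v)
        · rw [Finset.card_range, Finset.card_image_of_injOn hinj, hcard i]
      have h0 : (0 : ℕ) ∈ (K i).image fun v => part v.val := by
        rw [himg]; exact Finset.mem_range.2 (by omega)
      obtain ⟨x, hxK, hx0⟩ := Finset.mem_image.1 h0
      exact ⟨x, hxK, hx0⟩
    choose x hxK hx0 using hx
    have hcount : n ≤ (Finset.univ.filter
        fun v : Fin ((r ^ 2 - r + 1) * n - r) => part v.val = 0).card := by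
      have hle := Finset.card_le_card_of_injOn
        (s := (Finset.univ : Finset (Fin n)))
        (t := Finset.univ.filter
          fun v : Fin ((r ^ 2 - r + 1) * n - r) => part v.val = 0) x
        (fun i _ => Finset.mem_filter.2 ⟨Finset.mem_univ _, hx0 i⟩)
        (fun i _ j _ hij => by
          by_contra hne
          exact (Finset.disjoint_left.1 (hdisj i j hne) (hxK i)) (hij ▸ hxK j))
      simpa using hle
    omega
  | true =>
    -- red: all cliques lie in the same part
    have hadj : ∀ a b : Fin ((r ^ 2 - r + 1) * n - r),
        (SimpleGraph.fromRel fun x y =>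
          decide (part x.val = part y.val) = true).Adj a b → part a.val = part b.val := by
      intro a b hab
      obtain ⟨-, h | h⟩ := hab
      · simpa using h
      · simpa [eq_comm] using h
    have i0 : Fin n := ⟨0, hn⟩
    have hK0 : (K i0).Nonempty := Finset.card_pos.1 (by rw [hcard]; omega)
    obtain ⟨v0, hv0⟩ := hK0
    have hsame : ∀ i, ∀ u ∈ K i, part u.val = part v0.val := by
      intro i u hu
      exact reach_part hadj (hreach i i0 u hu v0 hv0)
    have hsub : Finset.univ.biUnion K ⊆ Finset.univ.filter
        (fun v : Fin ((r ^ 2 - r + 1) * n - r) => part v.val = part v0.val) := by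
      intro v hv
      obtain ⟨i, -, hi⟩ := Finset.mem_biUnion.1 hv
      exact Finset.mem_filter.2 ⟨Finset.mem_univ _, hsame i v hi⟩
    have hcardU : (Finset.univ.biUnion K).card = n * r := by
      rw [Finset.card_biUnion (fun i _ j _ hij => hdisj i j hij)]
      simp [hcard]
    have hle : n * r ≤ (Finset.univ.filter
        (fun v : Fin ((r ^ 2 - r + 1) * n - r) => part v.val = part v0.val)).card := by
      rw [← hcardU]
      exact Finset.card_le_card hsub
    have hnr : n * r = r * n := Nat.mul_comm n r
    have hnn : n ≤ n * r := Nat.le_mul_of_pos_right n (by omega)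
    rcases hp : part v0.val with _ | k
    · rw [hp] at hle
      have := le_trans hle hfiber0
      omega
    · rw [hp] at hle
      have := le_trans hle (hfiberS k)
      omega
end

section
/- Suppose the blue graph on K_N is disconnected with components whose union is partitioned into blue cliques B_1,…,B_{r−1}, all edges between distinct B_i being red, and suppose there is no red K_r disjoint from a fixed maximal red clique collection. Then every vertex v outside the B_i's with a red neighbour in each B_i yields a red K_r; consequently every such vertex is adjacent entirely in blue to one B_i and entirely in red to all others. -/
/-- Suppose the blue graph has `B_1, …, B_{r−1}` among its components: the `B_i` are
nonempty pairwise disjoint blue cliques, not blue-reachable from one another, with all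
edges between distinct `B_i` red.  If there is no red `K_r` inside `{z} ∪ B_1 ∪ ⋯ ∪ B_{r−1}`,
then the leftover vertex `z` is adjacent entirely in blue to exactly one `B_i` and entirely
in red to all the others. -/
theorem stmt_7 (r N : ℕ) (hr : 2 ≤ r)
    (c : Fin N → Fin N → Bool) (hsymm : ∀ u v, c u v = c v u)
    (B : Fin (r - 1) → Finset (Fin N))
    (hne : ∀ i, (B i).Nonempty)
    (hdisj : ∀ i j, i ≠ j → Disjoint (B i) (B j))
    (hblue : ∀ i, ∀ u ∈ B i, ∀ v ∈ B i, u ≠ v → c u v = false)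
    (hcross : ∀ i j, i ≠ j → ∀ u ∈ B i, ∀ v ∈ B j, c u v = true)
    (hcomp : ∀ i j, i ≠ j → ∀ u ∈ B i, ∀ v ∈ B j,
      ¬ (SimpleGraph.fromRel fun x y => c x y = false).Reachable u v)
    (z : Fin N) (hz : ∀ i, z ∉ B i)
    (hnored : ¬ ∃ S : Finset (Fin N),
      S ⊆ insert z (Finset.univ.biUnion B) ∧ S.card = r ∧
      ∀ u ∈ S, ∀ v ∈ S, u ≠ v → c u v = true) :
    ∃! i : Fin (r - 1), (∀ w ∈ B i, c z w = false) ∧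
      ∀ j, j ≠ i → ∀ w ∈ B j, c z w = true := by
  have key : ∀ g : Fin (r-1) → Fin N, (∀ j, g j ∈ B j) → (∀ j, c z (g j) = true) → False := by
    intro g hg hred
    apply hnored
    refine ⟨insert z (Finset.univ.image g), ?_, ?_, ?_⟩
    · intro x hx
      rcases Finset.mem_insert.1 hx with rfl | hx
      · exact Finset.mem_insert_self _ _
      · rcases Finset.mem_image.1 hx with ⟨j, _, rfl⟩
        exact Finset.mem_insert_of_mem (Finset.mem_biUnion.2 ⟨j, Finset.mem_univ _, hg j⟩)
    · have hginj : Function.Injective g := by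
        intro j k hjk
        by_contra hne'
        exact Finset.disjoint_left.1 (hdisj j k hne') (hg j) (hjk ▸ hg k)
      have hz' : z ∉ Finset.univ.image g := by
        simp only [Finset.mem_image]
        rintro ⟨j, _, rfl⟩
        exact hz j (hg j)
      rw [Finset.card_insert_of_notMem hz', Finset.card_image_of_injective _ hginj,
        Finset.card_univ, Fintype.card_fin]
      omega
    · have hcase : ∀ x, x ∈ insert z (Finset.univ.image g) → x = z ∨ ∃ j, x = g j := by
        intro x hx
        rcases Finset.mem_insert.1 hx with h | h
        · exact Or.inl h
        · rcases Finset.mem_image.1 h with ⟨j, _, rfl⟩; exact Or.inr ⟨j, rfl⟩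
      intro u hu v hv huv
      rcases hcase u hu with rfl | ⟨j, rfl⟩
      · rcases hcase v hv with rfl | ⟨k, rfl⟩
        · exact absurd rfl huv
        · exact hred k
      · rcases hcase v hv with rfl | ⟨k, rfl⟩
        · rw [hsymm]; exact hred j
        · have hjk : j ≠ k := fun h => huv (by rw [h])
          exact hcross j k hjk _ (hg j) _ (hg k)
  by_cases hb : ∃ i, ∃ w ∈ B i, c z w = false
  · obtain ⟨i, w0, hw0, hcw0⟩ := hb
    have hA : ∀ j, j ≠ i → ∀ w ∈ B j, c z w = true := by
      intro j hji w hw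
      by_contra hcw
      rw [Bool.not_eq_true] at hcw
      have h1 : (SimpleGraph.fromRel fun x y => c x y = false).Adj w0 z := by
        rw [SimpleGraph.fromRel_adj]
        refine ⟨fun h => hz i (h ▸ hw0), Or.inl (by rw [hsymm]; exact hcw0)⟩
      have h2 : (SimpleGraph.fromRel fun x y => c x y = false).Adj z w := by
        rw [SimpleGraph.fromRel_adj]
        refine ⟨fun h => hz j (h ▸ hw), Or.inl hcw⟩
      exact hcomp i j (fun h => hji h.symm) w0 hw0 w hw (h1.reachable.trans h2.reachable)
    have hB : ∀ w ∈ B i, c z w = false := by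
      intro w hw
      cases hcw : c z w with
      | false => rfl
      | true =>
        exfalso
        refine key (fun j => if h : j = i then w else (hne j).choose) ?_ ?_
        · intro j; by_cases h : j = i
          · subst h; simpa using hw
          · simp only [dif_neg h]; exact (hne j).choose_spec
        · intro j; by_cases h : j = i
          · subst h; simpa using hcw
          · simp only [dif_neg h]; exact hA j h _ (hne j).choose_spec
    refine ⟨i, ⟨hB, hA⟩, ?_⟩
    rintro i' ⟨hB', hA'⟩
    by_contra hii
    have := hA' i (fun h => hii h.symm) w0 hw0
    rw [hcw0] at this
    exact Bool.noConfusion this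
  · push_neg at hb
    exact absurd (key (fun j => (hne j).choose) (fun j => (hne j).choose_spec)
      (fun j => by
        have := hb j _ (hne j).choose_spec
        revert this; cases c z ((hne j).choose) <;> simp)) id
end

section
/- (Claim 1, case analysis) Let C be a red copy of K_r in a maximal disjoint family of red K_r's, and let B_1,…,B_{r−1} be disjoint blue cliques, each of size at least 2r, with all edges between distinct B_i red, such that each vertex of C has blue neighbours in at most one B_i. Then either (i) for each i some vertex of C is adjacent in blue to all but at most one vertex of B_i, or (ii) for all but two values of i there is exactly one vertex of C adjacent in blue to all of B_i, and there is a j such that the remaining three vertices of C are adjacent in blue to all of B_j. -/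
/-- Claim 1 (case analysis).  Let `C` be a red `K_r` from a maximal disjoint family of red
copies of `K_r`, and `B_1, …, B_{r−1}` disjoint blue cliques of size at least `2r`, disjoint
from `C`, with all edges between distinct `B_i` red, such that each vertex of `C` has blue
neighbours in at most one `B_i`.  Maximality: one cannot find two disjoint red copies of
`K_r` inside `C ∪ B_1 ∪ ⋯ ∪ B_{r−1}`.  Then either
(i) for each `i` some vertex of `C` is adjacent in blue to all but at most one vertex of
`B_i`, or (ii) for all but two values of `i` there is exactly one vertex of `C` adjacent in
blue to all of `B_i`, and there is a `j` such that three vertices of `C` are adjacent in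
blue to all of `B_j`. -/
theorem stmt_8 (r N : ℕ) (hr : 4 ≤ r)
    (c : Fin N → Fin N → Bool) (hsymm : ∀ u v, c u v = c v u)
    (C : Finset (Fin N)) (hCcard : C.card = r)
    (hCred : ∀ u ∈ C, ∀ v ∈ C, u ≠ v → c u v = true)
    (B : Fin (r - 1) → Finset (Fin N))
    (hBcard : ∀ i, 2 * r ≤ (B i).card)
    (hBblue : ∀ i, ∀ u ∈ B i, ∀ v ∈ B i, u ≠ v → c u v = false)
    (hBdisj : ∀ i j, i ≠ j → Disjoint (B i) (B j))
    (hBC : ∀ i, Disjoint (B i) C)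
    (hcross : ∀ i j, i ≠ j → ∀ u ∈ B i, ∀ v ∈ B j, c u v = true)
    (hone : ∀ x ∈ C, ∀ i j, i ≠ j → (∃ u ∈ B i, c x u = false) →
      ∀ v ∈ B j, c x v = true)
    (hmax : ¬ ∃ S₁ S₂ : Finset (Fin N),
      S₁ ⊆ C ∪ Finset.univ.biUnion B ∧ S₂ ⊆ C ∪ Finset.univ.biUnion B ∧
      Disjoint S₁ S₂ ∧ S₁.card = r ∧ S₂.card = r ∧
      (∀ u ∈ S₁, ∀ v ∈ S₁, u ≠ v → c u v = true) ∧
      (∀ u ∈ S₂, ∀ v ∈ S₂, u ≠ v → c u v = true)) :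
    (∀ i : Fin (r - 1), ∃ x ∈ C, ((B i).filter fun w => c x w = true).card ≤ 1) ∨
    ((∃ i₁ i₂ : Fin (r - 1), ∀ i, i ≠ i₁ → i ≠ i₂ →
        ∃! x, x ∈ C ∧ ∀ w ∈ B i, c x w = false) ∧
      ∃ j : Fin (r - 1), ∃ T ⊆ C, T.card = 3 ∧
        ∀ x ∈ T, ∀ w ∈ B j, c x w = false) := by
  classical
  by_cases hi : ∀ i : Fin (r - 1), ∃ x ∈ C, ((B i).filter fun w => c x w = true).card ≤ 1
  · exact Or.inl hi
  right
  push_neg at hi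
  obtain ⟨i₀, hi₀⟩ := hi
  have hBne : ∀ j, (B j).Nonempty := fun j => Finset.card_pos.mp (by have := hBcard j; omega)
  have hB2 : ∀ j : Fin (r-1), ∃ a b, a ∈ B j ∧ b ∈ B j ∧ a ≠ b := by
    intro j
    obtain ⟨a, ha, b, hb, hab⟩ := Finset.one_lt_card.mp (show 1 < (B j).card by have := hBcard j; omega)
    exact ⟨a, b, ha, hb, hab⟩
  choose t t' htmem ht'mem htne using hB2
  have hcard1 : (Finset.univ : Finset (Fin (r-1))).card = r - 1 := by simp
  -- core clique construction
  have core : ∀ (D : Finset (Fin N)) (J : Finset (Fin (r-1))) (w : Fin (r-1) → Fin N),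
      D ⊆ C → (∀ j ∈ J, w j ∈ B j) → (∀ z ∈ D, ∀ j ∈ J, c z (w j) = true) →
      (D ∪ J.image w) ⊆ C ∪ Finset.univ.biUnion B ∧
      (D ∪ J.image w).card = D.card + J.card ∧
      (∀ a ∈ D ∪ J.image w, ∀ b ∈ D ∪ J.image w, a ≠ b → c a b = true) := by
    intro D J w hD hw hred
    have himB : ∀ a ∈ J.image w, ∃ j ∈ J, a ∈ B j ∧ a = w j := by
      intro a ha
      obtain ⟨j, hj, rfl⟩ := Finset.mem_image.mp ha
      exact ⟨j, hj, hw j hj, rfl⟩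
    refine ⟨?_, ?_, ?_⟩
    · intro a ha
      rcases Finset.mem_union.mp ha with h | h
      · exact Finset.mem_union_left _ (hD h)
      · obtain ⟨j, _, hBj, _⟩ := himB a h
        exact Finset.mem_union_right _ (Finset.mem_biUnion.mpr ⟨j, Finset.mem_univ j, hBj⟩)
    · have hinj : Set.InjOn w J := by
        intro j hj k hk hjk
        by_contra hne
        exact (Finset.disjoint_left.mp (hBdisj j k hne) (hw j hj)) (hjk ▸ hw k hk)
      have hdisj : Disjoint D (J.image w) := by
        rw [Finset.disjoint_left]
        intro a haD haI
        obtain ⟨j, _, hBj, _⟩ := himB a haI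
        exact Finset.disjoint_left.mp (hBC j) hBj (hD haD)
      rw [Finset.card_union_of_disjoint hdisj, Finset.card_image_of_injOn hinj]
    · intro a ha b hb hab
      rcases Finset.mem_union.mp ha with haD | haI <;> rcases Finset.mem_union.mp hb with hbD | hbI
      · exact hCred a (hD haD) b (hD hbD) hab
      · obtain ⟨j, hj, _, hbw⟩ := himB b hbI
        rw [hbw]; exact hred a haD j hj
      · obtain ⟨j, hj, _, haw⟩ := himB a haI
        rw [hsymm, haw]; exact hred b hbD j hj
      · obtain ⟨j, hj, hBj, haw⟩ := himB a haI
        obtain ⟨k, hk, hBk, hbw⟩ := himB b hbI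
        have hjk : j ≠ k := by
          intro h; subst h; rw [haw, ← hbw] at hab; exact hab rfl
        exact hcross j k hjk _ hBj _ hBk
  -- build two disjoint red K_r's and contradict maximality
  have build : ∀ (D₁ D₂ : Finset (Fin N)) (J₁ J₂ : Finset (Fin (r-1))) (w₁ w₂ : Fin (r-1) → Fin N),
      D₁ ⊆ C → D₂ ⊆ C → (∀ j ∈ J₁, w₁ j ∈ B j) → (∀ j ∈ J₂, w₂ j ∈ B j) →
      (∀ z ∈ D₁, ∀ j ∈ J₁, c z (w₁ j) = true) → (∀ z ∈ D₂, ∀ j ∈ J₂, c z (w₂ j) = true) →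
      Disjoint D₁ D₂ → (∀ j ∈ J₁, ∀ k ∈ J₂, j = k → w₁ j ≠ w₂ k) →
      D₁.card + J₁.card = r → D₂.card + J₂.card = r → False := by
    intro D₁ D₂ J₁ J₂ w₁ w₂ hD₁ hD₂ hw₁ hw₂ hrd₁ hrd₂ hDD hww hc₁ hc₂
    obtain ⟨hs₁, hcard₁, hred₁⟩ := core D₁ J₁ w₁ hD₁ hw₁ hrd₁
    obtain ⟨hs₂, hcard₂, hred₂⟩ := core D₂ J₂ w₂ hD₂ hw₂ hrd₂
    apply hmax
    refine ⟨_, _, hs₁, hs₂, ?_, by rw [hcard₁, hc₁], by rw [hcard₂, hc₂], hred₁, hred₂⟩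
    rw [Finset.disjoint_left]
    intro a ha₁ ha₂
    rcases Finset.mem_union.mp ha₁ with h₁ | h₁ <;> rcases Finset.mem_union.mp ha₂ with h₂ | h₂
    · exact Finset.disjoint_left.mp hDD h₁ h₂
    · obtain ⟨j, hj, hwj⟩ := Finset.mem_image.mp h₂
      exact Finset.disjoint_left.mp (hBC j) (hwj ▸ hw₂ j hj) (hD₁ h₁)
    · obtain ⟨j, hj, hwj⟩ := Finset.mem_image.mp h₁
      exact Finset.disjoint_left.mp (hBC j) (hwj ▸ hw₁ j hj) (hD₂ h₂)
    · obtain ⟨j, hj, hwj⟩ := Finset.mem_image.mp h₁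
      obtain ⟨k, hk, hwk⟩ := Finset.mem_image.mp h₂
      by_cases hjk : j = k
      · exact hww j hj k hk hjk (hwj.trans hwk.symm)
      · exact Finset.disjoint_left.mp (hBdisj j k hjk) (hwj ▸ hw₁ j hj) (hwk ▸ hw₂ k hk)
  -- construction: one good vertex x with full transversal vs (C \ x) plus one vertex
  have xlemma : ∀ x ∈ C, ∀ (w : Fin (r-1) → Fin N), (∀ j, w j ∈ B j) → (∀ j, c x (w j) = true) →
      ∀ (k : Fin (r-1)) (v : Fin N), v ∈ B k → v ≠ w k → (∀ y ∈ C.erase x, c y v = true) → False := by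
    intro x hx w hw hxw k v hv hvw hyv
    apply build {x} (C.erase x) Finset.univ {k} w (fun _ => v)
    · simpa using hx
    · exact Finset.erase_subset _ _
    · exact fun j _ => hw j
    · intro j hj; rw [Finset.mem_singleton.mp hj]; exact hv
    · intro z hz j _
      rw [Finset.mem_singleton.mp hz]; exact hxw j
    · intro z hz j hj; exact hyv z hz
    · exact Finset.disjoint_singleton_left.mpr (Finset.notMem_erase x C)
    · intro j _ k' hk' hjk'
      rw [Finset.mem_singleton.mp hk'] at hjk'
      subst hjk'
      exact fun h => hvw h.symm
    · simp only [Finset.card_singleton, hcard1]; omega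
    · rw [Finset.card_erase_of_mem hx, hCcard, Finset.card_singleton]; omega
  -- construction: two pairs, each pair blue to all of one class
  have pairlemma : ∀ (k₁ k₂ : Fin (r-1)) (a₁ a₂ b₁ b₂ : Fin N),
      a₁ ∈ C → a₂ ∈ C → b₁ ∈ C → b₂ ∈ C → a₁ ≠ a₂ → b₁ ≠ b₂ →
      a₁ ≠ b₁ → a₁ ≠ b₂ → a₂ ≠ b₁ → a₂ ≠ b₂ →
      (∀ w ∈ B k₁, c a₁ w = false) → (∀ w ∈ B k₁, c a₂ w = false) →
      (∀ w ∈ B k₂, c b₁ w = false) → (∀ w ∈ B k₂, c b₂ w = false) → False := by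
    intro k₁ k₂ a₁ a₂ b₁ b₂ ha₁ ha₂ hb₁ hb₂ haa hbb h11 h12 h21 h22 hba₁ hba₂ hbb₁ hbb₂
    have redall : ∀ (z : Fin N), z ∈ C → ∀ (k : Fin (r-1)), (∀ w ∈ B k, c z w = false) →
        ∀ j, j ≠ k → ∀ w ∈ B j, c z w = true := by
      intro z hz k hblue j hj w hw
      obtain ⟨u, hu⟩ := hBne k
      exact hone z hz k j (fun h => hj h.symm) ⟨u, hu, hblue u hu⟩ w hw
    apply build {a₁, a₂} {b₁, b₂} (Finset.univ.erase k₁) (Finset.univ.erase k₂) t t'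
    · intro z hz
      rcases Finset.mem_insert.mp hz with h | h
      · rw [h]; exact ha₁
      · rw [Finset.mem_singleton.mp h]; exact ha₂
    · intro z hz
      rcases Finset.mem_insert.mp hz with h | h
      · rw [h]; exact hb₁
      · rw [Finset.mem_singleton.mp h]; exact hb₂
    · exact fun j _ => htmem j
    · exact fun j _ => ht'mem j
    · intro z hz j hj
      have hjne : j ≠ k₁ := (Finset.mem_erase.mp hj).1
      rcases Finset.mem_insert.mp hz with h | h
      · rw [h]; exact redall a₁ ha₁ k₁ hba₁ j hjne _ (htmem j)
      · rw [Finset.mem_singleton.mp h]; exact redall a₂ ha₂ k₁ hba₂ j hjne _ (htmem j)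
    · intro z hz j hj
      have hjne : j ≠ k₂ := (Finset.mem_erase.mp hj).1
      rcases Finset.mem_insert.mp hz with h | h
      · rw [h]; exact redall b₁ hb₁ k₂ hbb₁ j hjne _ (ht'mem j)
      · rw [Finset.mem_singleton.mp h]; exact redall b₂ hb₂ k₂ hbb₂ j hjne _ (ht'mem j)
    · rw [Finset.disjoint_left]
      intro a ha hb
      rcases Finset.mem_insert.mp ha with h | h <;> rcases Finset.mem_insert.mp hb with h' | h'
      · exact h11 (h ▸ h' ▸ rfl)
      · exact h12 (h ▸ (Finset.mem_singleton.mp h') ▸ rfl)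
      · exact h21 ((Finset.mem_singleton.mp h) ▸ h' ▸ rfl)
      · exact h22 ((Finset.mem_singleton.mp h) ▸ (Finset.mem_singleton.mp h') ▸ rfl)
    · intro j _ k _ hjk
      subst hjk
      exact htne j
    · rw [Finset.card_pair haa, Finset.card_erase_of_mem (Finset.mem_univ _), hcard1]; omega
    · rw [Finset.card_pair hbb, Finset.card_erase_of_mem (Finset.mem_univ _), hcard1]; omega
  -- Subclaim A: every vertex of C is blue to all of some class
  have hA : ∀ x ∈ C, ∃ j, ∀ w ∈ B j, c x w = false := by
    by_contra hA
    push_neg at hA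
    obtain ⟨x, hx, hgood⟩ := hA
    have hgood' : ∀ j, ∃ w, w ∈ B j ∧ c x w = true := by
      intro j
      obtain ⟨w, hw, hne⟩ := hgood j
      exact ⟨w, hw, Bool.ne_false_iff.mp hne⟩
    choose w hwB hwred using hgood'
    by_cases hA1 : ∃ k, ∀ y ∈ C.erase x, ∀ z ∈ B k, c y z = true
    · obtain ⟨k, hk⟩ := hA1
      by_cases hv : t k = w k
      · refine xlemma x hx w hwB hwred k (t' k) (ht'mem k) ?_ (fun y hy => hk y hy _ (ht'mem k))
        intro h
        exact htne k (hv.trans h.symm)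
      · exact xlemma x hx w hwB hwred k (t k) (htmem k) hv (fun y hy => hk y hy _ (htmem k))
    · push_neg at hA1
      have hA1' : ∀ k, ∃ y, y ∈ C.erase x ∧ ∃ z, z ∈ B k ∧ c y z = false := by
        intro k
        obtain ⟨y, hy, z, hz, hne⟩ := hA1 k
        refine ⟨y, hy, z, hz, ?_⟩
        cases h : c y z
        · rfl
        · exact absurd h hne
      choose g hgC z hzB hzblue using hA1'
      have hginj : Function.Injective g := by
        intro j k hjk
        by_contra hne
        have hred := hone (g j) (Finset.mem_of_mem_erase (hgC j)) j k hne
          ⟨z j, hzB j, hzblue j⟩ (z k) (hzB k)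
        rw [hjk, hzblue k] at hred
        exact Bool.false_ne_true hred
      have himage : Finset.univ.image g = C.erase x := by
        apply Finset.eq_of_subset_of_card_le
        · intro a ha
          obtain ⟨j, _, rfl⟩ := Finset.mem_image.mp ha
          exact hgC j
        · rw [Finset.card_image_of_injective _ hginj, Finset.card_erase_of_mem hx, hCcard, hcard1]
      have hy₀C : g i₀ ∈ C := Finset.mem_of_mem_erase (hgC i₀)
      obtain ⟨v, hvmem, hvne⟩ := Finset.exists_mem_ne (hi₀ (g i₀) hy₀C) (w i₀)
      have hvB : v ∈ B i₀ := (Finset.mem_filter.mp hvmem).1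
      have hvred : c (g i₀) v = true := (Finset.mem_filter.mp hvmem).2
      apply xlemma x hx w hwB hwred i₀ v hvB hvne
      intro y hy
      rw [← himage] at hy
      obtain ⟨j, _, rfl⟩ := Finset.mem_image.mp hy
      by_cases hj : j = i₀
      · subst hj; exact hvred
      · exact hone (g j) (Finset.mem_of_mem_erase (hgC j)) j i₀ hj ⟨z j, hzB j, hzblue j⟩ v hvB
  -- fibers
  set F : Fin (r-1) → Finset (Fin N) := fun j => C.filter (fun x => ∀ w ∈ B j, c x w = false) with hF
  have hFmem : ∀ j x, x ∈ F j ↔ x ∈ C ∧ ∀ w ∈ B j, c x w = false := by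
    intro j x; rw [hF]; exact Finset.mem_filter
  have hFsub : ∀ j, F j ⊆ C := fun j => Finset.filter_subset _ _
  have hFdisj : ∀ j k, j ≠ k → Disjoint (F j) (F k) := by
    intro j k hjk
    rw [Finset.disjoint_left]
    intro a haj hak
    obtain ⟨haC, hblue⟩ := (hFmem j a).mp haj
    obtain ⟨-, hblue'⟩ := (hFmem k a).mp hak
    obtain ⟨u, hu⟩ := hBne j
    obtain ⟨u', hu'⟩ := hBne k
    have := hone a haC j k hjk ⟨u, hu, hblue u hu⟩ u' hu'
    rw [hblue' u' hu'] at this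
    exact Bool.false_ne_true this
  have hCeq : C = Finset.univ.biUnion F := by
    apply Finset.Subset.antisymm
    · intro x hx
      obtain ⟨j, hj⟩ := hA x hx
      exact Finset.mem_biUnion.mpr ⟨j, Finset.mem_univ j, (hFmem j x).mpr ⟨hx, hj⟩⟩
    · intro x hx
      obtain ⟨j, -, hj⟩ := Finset.mem_biUnion.mp hx
      exact ((hFmem j x).mp hj).1
  have hsum : ∑ j, (F j).card = r := by
    rw [← Finset.card_biUnion (fun j _ k _ h => hFdisj j k h), ← hCeq, hCcard]
  have hFi₀ : (F i₀).card = 0 := by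
    rw [Finset.card_eq_zero]
    by_contra h
    obtain ⟨x, hx⟩ := Finset.nonempty_of_ne_empty h
    obtain ⟨hxC, hblue⟩ := (hFmem i₀ x).mp hx
    have h2 := hi₀ x hxC
    have hfe : (B i₀).filter (fun w => c x w = true) = ∅ := by
      rw [Finset.filter_eq_empty_iff]
      intro w hw
      simp [hblue w hw]
    rw [hfe] at h2
    simp at h2
  have h2fib : ∀ k₁ k₂, k₁ ≠ k₂ → 2 ≤ (F k₁).card → 2 ≤ (F k₂).card → False := by
    intro k₁ k₂ hk hc₁ hc₂
    obtain ⟨a₁, ha₁, a₂, ha₂, haa⟩ := Finset.one_lt_card.mp (show 1 < (F k₁).card by omega)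
    obtain ⟨b₁, hb₁, b₂, hb₂, hbb⟩ := Finset.one_lt_card.mp (show 1 < (F k₂).card by omega)
    have hd := Finset.disjoint_left.mp (hFdisj k₁ k₂ hk)
    refine pairlemma k₁ k₂ a₁ a₂ b₁ b₂ (hFsub k₁ ha₁) (hFsub k₁ ha₂) (hFsub k₂ hb₁) (hFsub k₂ hb₂)
      haa hbb (fun h => hd ha₁ (h ▸ hb₁)) (fun h => hd ha₁ (h ▸ hb₂))
      (fun h => hd ha₂ (h ▸ hb₁)) (fun h => hd ha₂ (h ▸ hb₂))
      ((hFmem k₁ a₁).mp ha₁).2 ((hFmem k₁ a₂).mp ha₂).2 ((hFmem k₂ b₁).mp hb₁).2 ((hFmem k₂ b₂).mp hb₂).2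
  have h4fib : ∀ k, (F k).card ≤ 3 := by
    intro k
    by_contra h
    push_neg at h
    obtain ⟨a₁, ha₁, a₂, ha₂, haa⟩ := Finset.one_lt_card.mp (show 1 < (F k).card by omega)
    have hsd : 2 ≤ ((F k) \ {a₁, a₂}).card := by
      have h1 := Finset.le_card_sdiff ({a₁, a₂} : Finset (Fin N)) (F k)
      have h2 : ({a₁, a₂} : Finset (Fin N)).card ≤ 2 := Finset.card_insert_le _ _ |>.trans (by simp)
      omega
    obtain ⟨b₁, hb₁, b₂, hb₂, hbb⟩ := Finset.one_lt_card.mp (show 1 < ((F k) \ {a₁, a₂}).card by omega)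
    obtain ⟨hb₁F, hb₁n⟩ := Finset.mem_sdiff.mp hb₁
    obtain ⟨hb₂F, hb₂n⟩ := Finset.mem_sdiff.mp hb₂
    simp only [Finset.mem_insert, Finset.mem_singleton, not_or] at hb₁n hb₂n
    exact pairlemma k k a₁ a₂ b₁ b₂ (hFsub k ha₁) (hFsub k ha₂) (hFsub k hb₁F) (hFsub k hb₂F)
      haa hbb (fun h => hb₁n.1 h.symm) (fun h => hb₂n.1 h.symm)
      (fun h => hb₁n.2 h.symm) (fun h => hb₂n.2 h.symm)
      ((hFmem k a₁).mp ha₁).2 ((hFmem k a₂).mp ha₂).2 ((hFmem k b₁).mp hb₁F).2 ((hFmem k b₂).mp hb₂F).2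
  have hbig : ∃ j, 2 ≤ (F j).card := by
    by_contra h
    push_neg at h
    have hle : ∑ j, (F j).card ≤ ∑ _j : Fin (r-1), 1 :=
      Finset.sum_le_sum (fun j _ => by have := h j; omega)
    have hone1 : (∑ _j : Fin (r-1), (1:ℕ)) = r - 1 := by simp
    omega
  obtain ⟨js, hjs⟩ := hbig
  have hi₀js : i₀ ≠ js := by intro h; rw [← h] at hjs; omega
  have honly : ∀ j, j ≠ js → (F j).card ≤ 1 := by
    intro j hj
    by_contra h
    push_neg at h
    exact h2fib j js hj h hjs
  have key : ∀ i : Fin (r-1), i ≠ i₀ → i ≠ js → r ≤ (F js).card + (F i).card + (r - 4) := by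
    intro i hii₀ hijs
    have h1 : i₀ ∈ Finset.univ.erase js := Finset.mem_erase.mpr ⟨hi₀js, Finset.mem_univ _⟩
    have h2 : i ∈ (Finset.univ.erase js).erase i₀ :=
      Finset.mem_erase.mpr ⟨hii₀, Finset.mem_erase.mpr ⟨hijs, Finset.mem_univ _⟩⟩
    have e1 : ∑ j ∈ Finset.univ.erase js, (F j).card + (F js).card = ∑ j, (F j).card :=
      Finset.sum_erase_add _ _ (Finset.mem_univ js)
    have e2 : ∑ j ∈ (Finset.univ.erase js).erase i₀, (F j).card + (F i₀).card
        = ∑ j ∈ Finset.univ.erase js, (F j).card :=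
      Finset.sum_erase_add _ _ h1
    have e3 : ∑ j ∈ ((Finset.univ.erase js).erase i₀).erase i, (F j).card + (F i).card
        = ∑ j ∈ (Finset.univ.erase js).erase i₀, (F j).card :=
      Finset.sum_erase_add _ _ h2
    set s := ((Finset.univ.erase js).erase i₀).erase i with hs
    have hscard : s.card = r - 4 := by
      rw [hs, Finset.card_erase_of_mem h2, Finset.card_erase_of_mem h1,
        Finset.card_erase_of_mem (Finset.mem_univ _), hcard1]
      omega
    have hsum_s : ∑ j ∈ s, (F j).card ≤ s.card := by
      calc ∑ j ∈ s, (F j).card ≤ ∑ _j ∈ s, 1 :=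
            Finset.sum_le_sum (fun j hj => honly j
              (Finset.mem_erase.mp (Finset.mem_erase.mp (Finset.mem_erase.mp hj).2).2).1)
        _ = s.card := by simp
    omega
  have hthird : ∃ i : Fin (r-1), i ≠ i₀ ∧ i ≠ js := by
    have h1 := Finset.le_card_sdiff ({i₀, js} : Finset (Fin (r-1))) Finset.univ
    have h2 : ({i₀, js} : Finset (Fin (r-1))).card ≤ 2 :=
      (Finset.card_insert_le _ _).trans (by simp)
    have hsd : 0 < ((Finset.univ : Finset (Fin (r-1))) \ {i₀, js}).card := by
      rw [hcard1] at h1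
      omega
    obtain ⟨i, hi⟩ := Finset.card_pos.mp hsd
    obtain ⟨-, hin⟩ := Finset.mem_sdiff.mp hi
    simp only [Finset.mem_insert, Finset.mem_singleton, not_or] at hin
    exact ⟨i, hin.1, hin.2⟩
  obtain ⟨i₂, h2i₀, h2js⟩ := hthird
  have hjs3 : 3 ≤ (F js).card := by
    have hk := key i₂ h2i₀ h2js
    have hl := honly i₂ h2js
    omega
  have hexact1 : ∀ i, i ≠ i₀ → i ≠ js → (F i).card = 1 := by
    intro i h1 h2
    have hk := key i h1 h2
    have h3 := h4fib js
    have hle := honly i h2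
    omega
  refine ⟨⟨i₀, js, ?_⟩, js, ?_⟩
  · intro i hii₀ hijs
    obtain ⟨a, ha⟩ := Finset.card_eq_one.mp (hexact1 i hii₀ hijs)
    have haF : a ∈ F i := by rw [ha]; exact Finset.mem_singleton_self a
    refine ⟨a, (hFmem i a).mp haF, ?_⟩
    intro x hxp
    have hxF : x ∈ F i := (hFmem i x).mpr hxp
    rw [ha] at hxF
    exact Finset.mem_singleton.mp hxF
  · obtain ⟨T, hT, hTcard⟩ := Finset.exists_subset_card_eq hjs3
    refine ⟨T, hT.trans (hFsub js), hTcard, ?_⟩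
    intro x hx w hw
    exact ((hFmem js x).mp (hT hx)).2 w hw
end

section
/- (Claim 2) Let C and C' be disjoint red copies of K_r in a maximal disjoint family of red K_r's, with vertices x_1,x_2,x_3 ∈ C and y_1,y_2,y_3 ∈ C' all paired with the same blue clique B_i (i.e., adjacent in red to all B_j, j ≠ i), where B_1,…,B_{r−1} are disjoint blue cliques each of size at least 3r with all cross edges red. Then every edge x_j y_k (j,k ∈ {1,2,3}) is blue. -/
/-- Claim 2.  Let `C` and `C'` be disjoint red copies of `K_r` from a maximal disjoint
family of red `K_r`'s, with vertices `x_1, x_2, x_3 ∈ C` and `y_1, y_2, y_3 ∈ C'` all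
paired with the same blue clique `B_i` (adjacent in red to every `B_j`, `j ≠ i`), where
`B_1, …, B_{r−1}` are disjoint blue cliques of size at least `3r`, disjoint from `C ∪ C'`,
with all edges between distinct `B_j` red.  Maximality: no three pairwise disjoint red
copies of `K_r` inside `C ∪ C' ∪ B_1 ∪ ⋯ ∪ B_{r−1}`.  Then every edge `x_j y_k` is blue. -/
theorem stmt_9 (r N : ℕ) (hr : 4 ≤ r)
    (c : Fin N → Fin N → Bool) (hsymm : ∀ u v, c u v = c v u)
    (C C' : Finset (Fin N)) (hCcard : C.card = r) (hC'card : C'.card = r)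
    (hCC' : Disjoint C C')
    (hCred : ∀ u ∈ C, ∀ v ∈ C, u ≠ v → c u v = true)
    (hC'red : ∀ u ∈ C', ∀ v ∈ C', u ≠ v → c u v = true)
    (B : Fin (r - 1) → Finset (Fin N))
    (hBcard : ∀ i, 3 * r ≤ (B i).card)
    (hBblue : ∀ i, ∀ u ∈ B i, ∀ v ∈ B i, u ≠ v → c u v = false)
    (hBdisj : ∀ i j, i ≠ j → Disjoint (B i) (B j))
    (hBC : ∀ i, Disjoint (B i) (C ∪ C'))
    (hcross : ∀ i j, i ≠ j → ∀ u ∈ B i, ∀ v ∈ B j, c u v = true)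
    (i : Fin (r - 1)) (x y : Fin 3 → Fin N)
    (hx : ∀ a, x a ∈ C) (hy : ∀ a, y a ∈ C')
    (hxinj : Function.Injective x) (hyinj : Function.Injective y)
    (hxpair : ∀ a, ∀ j, j ≠ i → ∀ w ∈ B j, c (x a) w = true)
    (hypair : ∀ a, ∀ j, j ≠ i → ∀ w ∈ B j, c (y a) w = true)
    (hmax : ¬ ∃ S₁ S₂ S₃ : Finset (Fin N),
      S₁ ⊆ C ∪ C' ∪ Finset.univ.biUnion B ∧
      S₂ ⊆ C ∪ C' ∪ Finset.univ.biUnion B ∧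
      S₃ ⊆ C ∪ C' ∪ Finset.univ.biUnion B ∧
      Disjoint S₁ S₂ ∧ Disjoint S₁ S₃ ∧ Disjoint S₂ S₃ ∧
      S₁.card = r ∧ S₂.card = r ∧ S₃.card = r ∧
      (∀ u ∈ S₁, ∀ v ∈ S₁, u ≠ v → c u v = true) ∧
      (∀ u ∈ S₂, ∀ v ∈ S₂, u ≠ v → c u v = true) ∧
      (∀ u ∈ S₃, ∀ v ∈ S₃, u ≠ v → c u v = true)) :
    ∀ a b : Fin 3, c (x a) (y b) = false := by

  intro a b
  by_contra hblue
  have hred : c (x a) (y b) = true := by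
    cases h : c (x a) (y b)
    · exact absurd h hblue
    · rfl
  classical
  have ht : ∀ m : Fin (r - 1), ∃ t : Fin 3 → Fin N,
      (∀ k, t k ∈ B m) ∧ Function.Injective t := by
    intro m
    obtain ⟨s, hs, hcard⟩ := (B m).exists_subset_card_eq (n := 3) (by have := hBcard m; omega)
    refine ⟨fun k => (s.orderIsoOfFin hcard k : Fin N), ?_, ?_⟩
    · intro k; exact hs (s.orderIsoOfFin hcard k).2
    · intro p q h; exact (s.orderIsoOfFin hcard).injective (Subtype.ext h)
  choose t htmem htinj using ht
  set J : Finset (Fin (r - 1)) := Finset.univ.erase i with hJdef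
  have hJmem : ∀ m ∈ J, m ≠ i := fun m hm => (Finset.mem_erase.mp hm).1
  have hJcard : J.card = r - 2 := by
    have h1 : J.card = (r - 1) - 1 := by
      simp [hJdef, Finset.card_erase_of_mem, Finset.card_univ]
    omega
  have htinj2 : ∀ (m m' : Fin (r - 1)) k k', t m k = t m' k' → m = m' := by
    intro m m' k k' h
    by_contra hne
    exact (Finset.disjoint_left.mp (hBdisj m m' hne) (htmem m k)) (h ▸ htmem m' k')
  have htnotCC' : ∀ m k, t m k ∉ C ∪ C' := fun m k =>
    Finset.disjoint_left.mp (hBC m) (htmem m k)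
  let mk : Fin N → Fin N → Fin 3 → Finset (Fin N) := fun u v k =>
    insert u (insert v (J.image fun m => t m k))
  have hmkmem : ∀ u v k w, w ∈ mk u v k ↔ (w = u ∨ w = v ∨ ∃ m ∈ J, t m k = w) := by
    intro u v k w
    simp [mk, Finset.mem_insert, Finset.mem_image]
  have hmksub : ∀ u v k, u ∈ C ∪ C' → v ∈ C ∪ C' →
      mk u v k ⊆ C ∪ C' ∪ Finset.univ.biUnion B := by
    intro u v k hu hv w hw
    rw [hmkmem] at hw
    rcases hw with rfl | rfl | ⟨m, hm, rfl⟩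
    · exact Finset.mem_union_left _ hu
    · exact Finset.mem_union_left _ hv
    · exact Finset.mem_union_right _ (Finset.mem_biUnion.mpr ⟨m, Finset.mem_univ m, htmem m k⟩)
  have hmkcard : ∀ u v k, u ≠ v → u ∈ C ∪ C' → v ∈ C ∪ C' → (mk u v k).card = r := by
    intro u v k huv hu hv
    have h1 : v ∉ J.image fun m => t m k := by
      simp only [Finset.mem_image]
      rintro ⟨m, hm, h⟩
      exact htnotCC' m k (h.symm ▸ hv)
    have h2 : u ∉ insert v (J.image fun m => t m k) := by
      simp only [Finset.mem_insert, Finset.mem_image]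
      rintro (rfl | ⟨m, hm, h⟩)
      · exact huv rfl
      · exact htnotCC' m k (h.symm ▸ hu)
    have h3 : (J.image fun m => t m k).card = r - 2 := by
      rw [Finset.card_image_of_injOn, hJcard]
      intro m _ m' _ h
      exact htinj2 m m' k k h
    show (insert u (insert v (J.image fun m => t m k))).card = r
    rw [Finset.card_insert_of_notMem h2, Finset.card_insert_of_notMem h1, h3]
    omega
  have hmkred : ∀ u v k, c u v = true →
      (∀ j, j ≠ i → ∀ w ∈ B j, c u w = true) →
      (∀ j, j ≠ i → ∀ w ∈ B j, c v w = true) →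
      ∀ w ∈ mk u v k, ∀ w' ∈ mk u v k, w ≠ w' → c w w' = true := by
    intro u v k huv hPu hPv w hw w' hw' hne
    rw [hmkmem] at hw hw'
    rcases hw with rfl | rfl | ⟨m, hm, rfl⟩ <;> rcases hw' with rfl | rfl | ⟨m', hm', rfl⟩
    · exact absurd rfl hne
    · exact huv
    · exact hPu m' (hJmem m' hm') _ (htmem m' k)
    · rw [hsymm]; exact huv
    · exact absurd rfl hne
    · exact hPv m' (hJmem m' hm') _ (htmem m' k)
    · rw [hsymm]; exact hPu m (hJmem m hm) _ (htmem m k)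
    · rw [hsymm]; exact hPv m (hJmem m hm) _ (htmem m k)
    · have hmm : m ≠ m' := fun h => hne (by rw [h])
      exact hcross m m' hmm _ (htmem m k) _ (htmem m' k)
  have hmkdisj : ∀ u v u' v' k k', k ≠ k' →
      u ∈ C ∪ C' → v ∈ C ∪ C' → u' ∈ C ∪ C' → v' ∈ C ∪ C' →
      u ≠ u' → u ≠ v' → v ≠ u' → v ≠ v' →
      Disjoint (mk u v k) (mk u' v' k') := by
    intro u v u' v' k k' hkk hu hv hu' hv' h1 h2 h3 h4
    rw [Finset.disjoint_left]
    intro w hw hw'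
    rw [hmkmem] at hw hw'
    rcases hw with rfl | rfl | ⟨m, hm, rfl⟩ <;> rcases hw' with h | h | ⟨m', hm', h⟩
    · exact h1 h
    · exact h2 h
    · exact htnotCC' m' k' (by rw [h]; exact hu)
    · exact h3 h
    · exact h4 h
    · exact htnotCC' m' k' (by rw [h]; exact hv)
    · exact htnotCC' m k (by rw [h]; exact hu')
    · exact htnotCC' m k (by rw [h]; exact hv')
    · obtain rfl : m = m' := htinj2 m m' k k' h.symm
      exact hkk ((htinj m h).symm)
  obtain ⟨p, q, hpq, hpqset⟩ := Finset.card_eq_two.mp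
    (show ((Finset.univ : Finset (Fin 3)).erase a).card = 2 by simp)
  have hpa : p ≠ a := (Finset.mem_erase.mp (by rw [hpqset]; simp)).1
  have hqa : q ≠ a := (Finset.mem_erase.mp (by rw [hpqset]; simp)).1
  obtain ⟨p', q', hpq', hpqset'⟩ := Finset.card_eq_two.mp
    (show ((Finset.univ : Finset (Fin 3)).erase b).card = 2 by simp)
  have hpb : p' ≠ b := (Finset.mem_erase.mp (by rw [hpqset']; simp)).1
  have hqb : q' ≠ b := (Finset.mem_erase.mp (by rw [hpqset']; simp)).1
  have hxy : ∀ s s', x s ≠ y s' := fun s s' h =>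
    Finset.disjoint_left.mp hCC' (hx s) (h ▸ hy s')
  have hxne : ∀ s s', s ≠ s' → x s ≠ x s' := fun s s' hss h => hss (hxinj h)
  have hyne : ∀ s s', s ≠ s' → y s ≠ y s' := fun s s' hss h => hss (hyinj h)
  have hxm : ∀ s, x s ∈ C ∪ C' := fun s => Finset.mem_union_left _ (hx s)
  have hym : ∀ s, y s ∈ C ∪ C' := fun s => Finset.mem_union_right _ (hy s)
  apply hmax
  refine ⟨mk (x a) (y b) 0, mk (x p) (x q) 1, mk (y p') (y q') 2,
    hmksub _ _ _ (hxm a) (hym b), hmksub _ _ _ (hxm p) (hxm q),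
    hmksub _ _ _ (hym p') (hym q'),
    hmkdisj _ _ _ _ _ _ (by decide) (hxm a) (hym b) (hxm p) (hxm q)
      (hxne a p (Ne.symm hpa)) (hxne a q (Ne.symm hqa)) (fun h => hxy p b h.symm)
      (fun h => hxy q b h.symm),
    hmkdisj _ _ _ _ _ _ (by decide) (hxm a) (hym b) (hym p') (hym q')
      (hxy a p') (hxy a q') (hyne b p' (Ne.symm hpb)) (hyne b q' (Ne.symm hqb)),
    hmkdisj _ _ _ _ _ _ (by decide) (hxm p) (hxm q) (hym p') (hym q')
      (hxy p p') (hxy p q') (hxy q p') (hxy q q'),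
    hmkcard _ _ _ (hxy a b) (hxm a) (hym b),
    hmkcard _ _ _ (hxne p q hpq) (hxm p) (hxm q),
    hmkcard _ _ _ (hyne p' q' hpq') (hym p') (hym q'),
    hmkred _ _ _ hred (hxpair a) (hypair b),
    hmkred _ _ _ (hCred _ (hx p) _ (hx q) (hxne p q hpq)) (hxpair p) (hxpair q),
    hmkred _ _ _ (hC'red _ (hy p') _ (hy q') (hyne p' q' hpq')) (hypair p') (hypair q')⟩
end
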